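/- Let φ be a 3-CNF formula with clauses c_1, ..., c_m over variables x_1, ..., x_n. Construct the graph G_φ with vertex set {c_1, ..., c_m} ∪ {x_i, x̄_i : i ∈ [n]} ∪ {s, t} and edge set {c_i c_j : 1 ≤ i < j ≤ m} ∪ {t x_i, t x̄_i : i ∈ [n]} ∪ {x_i c_j : the literal x_i occurs in clause c_j} ∪ {x̄_i c_j : the literal x̄_i occurs in clause c_j} ∪ {s t}. Then there exists a coloring c of V(G_φ) with two colors that makes G_φ rainbow vertex-connected and satisfies c(x_i) ≠ c(x̄_i) for every i ∈ [n] if and only if φ is satisfiable. -/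

import Mathlib

open SimpleGraph

/-- A walk is a rainbow path if it is a path and its internal vertices
(the support without the first and last vertex) receive pairwise distinct colors. -/
def IsRainbowPath {V α : Type*} (G : SimpleGraph V) (c : V → α) {u v : V}
    (p : G.Walk u v) : Prop :=
  p.IsPath ∧ (p.support.tail.dropLast.map c).Nodup

/-- A vertex coloring makes a graph rainbow vertex-connected if every two distinct
vertices are joined by a rainbow path. -/
def RainbowVertexConnected {V α : Type*} (G : SimpleGraph V) (c : V → α) : Prop :=
  ∀ u v : V, u ≠ v → ∃ p : G.Walk u v, IsRainbowPath G c p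

namespace SatGraph

variable {m n : ℕ}

/-- Vertices of `G_φ`: the clause vertices `c_i = Sum.inl i`, the literal vertices
`x_j = Sum.inr (Sum.inl (j, true))` and `x̄_j = Sum.inr (Sum.inl (j, false))`, and
`s = Sum.inr (Sum.inr true)`, `t = Sum.inr (Sum.inr false)`. -/
def Vert (m n : ℕ) : Type := Fin m ⊕ ((Fin n × Bool) ⊕ Bool)

/-- The adjacency generating relation of `G_φ`: the clause vertices form a clique, `t` is
joined to every literal vertex, each literal is joined to the clauses in which it occurs,
and `s` is joined to `t`. -/
def rel (φ : Fin m → Finset (Fin n × Bool)) : Vert m n → Vert m n → Prop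
  | Sum.inl _, Sum.inl _ => True
  | Sum.inr (Sum.inr false), Sum.inr (Sum.inl _) => True
  | Sum.inr (Sum.inl l), Sum.inl i => l ∈ φ i
  | Sum.inr (Sum.inr true), Sum.inr (Sum.inr false) => True
  | _, _ => False

/-- The graph `G_φ`. -/
def graph (φ : Fin m → Finset (Fin n × Bool)) : SimpleGraph (Vert m n) :=
  SimpleGraph.fromRel (rel φ)

end SatGraph

/-!
With two colours a rainbow path has at most two inner vertices. The only neighbour of `s` is
`t`, whose other neighbours are the literals, so a rainbow path from `s` to a clause `c_i` is
`s, t, ℓ, c_i` with `ℓ ∈ c_i` coloured unlike `t`: making true exactly the literals coloured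
unlike `t` satisfies `φ`, consistently because `x_j` and `x̄_j` get different colours.
Conversely, colour the clauses and the true literals `0`, and `s`, `t` and the false literals
`1`. Every non-clause vertex is at distance at most one from `t`, the clauses form a clique, and
a clause `c_i` reaches `t` through a true literal `ℓ ∈ c_i`, with inner colours `0, 1`.
-/

theorem List.nodup_of_length_le_one {α : Type*} {l : List α} (h : l.length ≤ 1) : l.Nodup := by
  match l, h with
  | [], _ => exact List.nodup_nil
  | [_], _ => exact List.nodup_singleton _
  | _ :: _ :: _, h => simp at h

theorem Fin.eq_iff_ne_of_ne {a b d : Fin 2} (hab : a ≠ b) : a = d ↔ b ≠ d := by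
  revert a b d
  decide

namespace SimpleGraph.Walk

variable {V α : Type*} {G : SimpleGraph V} {u v : V}

def innerSupport (p : G.Walk u v) : List V := p.support.tail.dropLast

theorem isRainbowPath_iff {c : V → α} (p : G.Walk u v) :
    IsRainbowPath G c p ↔ p.IsPath ∧ (p.innerSupport.map c).Nodup := Iff.rfl

theorem length_innerSupport (p : G.Walk u v) : p.innerSupport.length = p.length - 1 := by
  simp [innerSupport]

theorem innerSupport_reverse (p : G.Walk u v) :
    p.reverse.innerSupport = p.innerSupport.reverse := by
  rw [innerSupport, innerSupport, support_reverse, List.tail_reverse, List.dropLast_reverse,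
    List.tail_dropLast]

theorem innerSupport_bypass_sublist [DecidableEq V] (p : G.Walk u v) :
    List.Sublist p.bypass.innerSupport p.innerSupport := by
  have h := (p.support_bypass_sublist_support.tail.reverse).tail.reverse
  simpa only [innerSupport, List.tail_reverse, List.reverse_reverse] using h

end SimpleGraph.Walk

section Rainbow

open SimpleGraph.Walk

variable {V α : Type*} {G : SimpleGraph V} {c : V → α} {u v : V}

theorem IsRainbowPath.reverse {p : G.Walk u v} (hp : IsRainbowPath G c p) :
    IsRainbowPath G c p.reverse := by
  rw [isRainbowPath_iff, innerSupport_reverse, List.map_reverse, List.nodup_reverse]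
  exact ⟨hp.1.reverse, hp.2⟩

theorem IsRainbowPath.length_le_card [Fintype α] {p : G.Walk u v}
    (hp : IsRainbowPath G c p) : p.length ≤ Fintype.card α + 1 := by
  have h : (p.innerSupport.map c).length ≤ Fintype.card α := hp.2.length_le_card
  rw [List.length_map, length_innerSupport] at h
  omega

theorem exists_isRainbowPath_of_nodup (p : G.Walk u v) (hp : (p.innerSupport.map c).Nodup) :
    ∃ q : G.Walk u v, IsRainbowPath G c q := by
  classical
  exact ⟨p.bypass, p.bypass_isPath, hp.sublist (p.innerSupport_bypass_sublist.map c)⟩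

theorem exists_isRainbowPath_of_length_le_two (p : G.Walk u v) (hp : p.length ≤ 2) :
    ∃ q : G.Walk u v, IsRainbowPath G c q := by
  refine exists_isRainbowPath_of_nodup p (List.nodup_of_length_le_one ?_)
  rw [List.length_map, length_innerSupport]
  omega

end Rainbow

namespace SatGraph

variable {m n : ℕ} {φ : Fin m → Finset (Fin n × Bool)}

def s : Vert m n := Sum.inr (Sum.inr true)
def t : Vert m n := Sum.inr (Sum.inr false)
def lit (l : Fin n × Bool) : Vert m n := Sum.inr (Sum.inl l)
def clause (i : Fin m) : Vert m n := Sum.inl i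

theorem graph_adj {u v : Vert m n} : (graph φ).Adj u v ↔ u ≠ v ∧ (rel φ u v ∨ rel φ v u) :=
  fromRel_adj _ _ _

theorem adj_s_iff {v : Vert m n} : (graph φ).Adj s v ↔ v = t := by
  rw [graph_adj]; rcases v with _ | _ | (_ | _) <;> simp [rel, Vert, s, t]

theorem adj_t_iff {v : Vert m n} : (graph φ).Adj t v ↔ v = s ∨ ∃ l, v = lit l := by
  rw [graph_adj]; rcases v with _ | _ | (_ | _) <;> simp [rel, Vert, s, t, lit]

theorem adj_lit_clause_iff {l : Fin n × Bool} {i : Fin m} :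
    (graph φ).Adj (lit l) (clause i) ↔ l ∈ φ i := by
  rw [graph_adj]; simp [rel, Vert, lit, clause]

theorem adj_clause_clause {i j : Fin m} (h : i ≠ j) : (graph φ).Adj (clause i) (clause j) := by
  rw [graph_adj]; simpa [rel, Vert, clause] using h

theorem adj_t_lit (l : Fin n × Bool) : (graph φ).Adj t (lit l) :=
  adj_t_iff.mpr (Or.inr ⟨l, rfl⟩)

theorem exists_walk_to_t_or_eq_clause (v : Vert m n) :
    (∃ p : (graph φ).Walk v t, p.length ≤ 1) ∨ ∃ i, v = clause i := by
  rcases v with i | l | (_ | _)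
  · exact Or.inr ⟨i, rfl⟩
  · exact Or.inl ⟨.cons (adj_t_lit l).symm .nil, le_rfl⟩
  · exact Or.inl ⟨.nil, zero_le_one⟩
  · exact Or.inl ⟨.cons (adj_s_iff.mpr rfl) .nil, le_rfl⟩

theorem exists_mem_color_ne_of_isRainbowPath {c : Vert m n → Fin 2} {i : Fin m}
    {p : (graph φ).Walk s (clause i)} (hp : IsRainbowPath (graph φ) c p) :
    ∃ l ∈ φ i, c (lit l) ≠ c t := by
  have hlen := hp.length_le_card
  rw [Fintype.card_fin] at hlen
  obtain _ | ⟨hs, q⟩ := p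
  obtain rfl := adj_s_iff.mp hs
  obtain _ | ⟨ht, r⟩ := q
  rcases adj_t_iff.mp ht with rfl | ⟨l, rfl⟩
  · simpa using hp.1.support_nodup
  · obtain _ | ⟨hl, _ | ⟨_, _⟩⟩ := r
    · refine ⟨l, adj_lit_clause_iff.mp hl, ?_⟩
      simpa [Walk.innerSupport, eq_comm] using hp.2
    · simp only [Walk.length_cons] at hlen
      omega

def assignmentOf (c : Vert m n → Fin 2) (j : Fin n) : Bool := decide (c (lit (j, true)) ≠ c t)

theorem assignmentOf_eq_iff {c : Vert m n → Fin 2}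
    (hc : ∀ j, c (lit (j, true)) ≠ c (lit (j, false))) (l : Fin n × Bool) :
    assignmentOf c l.1 = l.2 ↔ c (lit l) ≠ c t := by
  obtain ⟨j, _ | _⟩ := l
  · simpa [assignmentOf] using Fin.eq_iff_ne_of_ne (hc j)
  · simp [assignmentOf]

theorem assignmentOf_satisfies {c : Vert m n → Fin 2} (hrvc : RainbowVertexConnected (graph φ) c)
    (hc : ∀ j, c (lit (j, true)) ≠ c (lit (j, false))) (i : Fin m) :
    ∃ l ∈ φ i, assignmentOf c l.1 = l.2 := by
  obtain ⟨p, hp⟩ := hrvc s (clause i) (by simp [s, clause, Vert])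
  obtain ⟨l, hl, hcl⟩ := exists_mem_color_ne_of_isRainbowPath hp
  exact ⟨l, hl, (assignmentOf_eq_iff hc l).mpr hcl⟩

def colorOf (σ : Fin n → Bool) : Vert m n → Fin 2
  | Sum.inl _ => 0
  | Sum.inr (Sum.inl l) => if σ l.1 = l.2 then 0 else 1
  | Sum.inr (Sum.inr _) => 1

theorem colorOf_lit (σ : Fin n → Bool) (l : Fin n × Bool) :
    colorOf σ (lit l : Vert m n) = if σ l.1 = l.2 then 0 else 1 := rfl

theorem colorOf_t (σ : Fin n → Bool) : colorOf σ (t : Vert m n) = 1 := rfl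

theorem colorOf_lit_true_ne_false (σ : Fin n → Bool) (j : Fin n) :
    colorOf σ (lit (j, true) : Vert m n) ≠ colorOf σ (lit (j, false) : Vert m n) := by
  cases h : σ j <;> simp [colorOf_lit, h]

theorem exists_isRainbowPath_clause {σ : Fin n → Bool} {i : Fin m} {ℓ : Fin n × Bool}
    (hℓ : ℓ ∈ φ i) (hσℓ : σ ℓ.1 = ℓ.2) {v : Vert m n} (q : (graph φ).Walk t v)
    (hq : q.length ≤ 1) :
    ∃ p : (graph φ).Walk (clause i) v, IsRainbowPath (graph φ) (colorOf σ) p := by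
  have hcℓ : (graph φ).Adj (clause i) (lit ℓ) := (adj_lit_clause_iff.mpr hℓ).symm
  refine exists_isRainbowPath_of_nodup (.cons hcℓ (.cons (adj_t_lit ℓ).symm q)) ?_
  obtain _ | ⟨_, _ | ⟨_, _⟩⟩ := q
  · simp [Walk.innerSupport]
  · simp [Walk.innerSupport, colorOf_lit, colorOf_t, hσℓ]
  · simp only [Walk.length_cons] at hq
    omega

theorem rainbowVertexConnected_colorOf {σ : Fin n → Bool}
    (hσ : ∀ i, ∃ l ∈ φ i, σ l.1 = l.2) : RainbowVertexConnected (graph φ) (colorOf σ) := by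
  intro u v _
  rcases exists_walk_to_t_or_eq_clause (φ := φ) u with ⟨p, hp⟩ | ⟨i, rfl⟩ <;>
    rcases exists_walk_to_t_or_eq_clause (φ := φ) v with ⟨q, hq⟩ | ⟨j, rfl⟩
  · refine exists_isRainbowPath_of_length_le_two (p.append q.reverse) ?_
    rw [Walk.length_append, Walk.length_reverse]
    omega
  · obtain ⟨ℓ, hℓ, hσℓ⟩ := hσ j
    obtain ⟨r, hr⟩ := exists_isRainbowPath_clause hℓ hσℓ p.reverse (by simpa using hp)
    exact ⟨r.reverse, hr.reverse⟩
  · obtain ⟨ℓ, hℓ, hσℓ⟩ := hσ i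
    exact exists_isRainbowPath_clause hℓ hσℓ q.reverse (by simpa using hq)
  · by_cases h : i = j
    · subst h
      exact exists_isRainbowPath_of_length_le_two .nil zero_le_two
    · exact exists_isRainbowPath_of_length_le_two (.cons (adj_clause_clause h) .nil) one_le_two

end SatGraph

open SatGraph in
theorem rvc_two_iff_satisfiable_general {m n : ℕ} (φ : Fin m → Finset (Fin n × Bool)) :
    (∃ c : Vert m n → Fin 2, RainbowVertexConnected (graph φ) c ∧
        ∀ j : Fin n, c (Sum.inr (Sum.inl (j, true))) ≠ c (Sum.inr (Sum.inl (j, false)))) ↔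
      (∃ σ : Fin n → Bool, ∀ i : Fin m, ∃ l ∈ φ i, σ l.1 = l.2) := by
  constructor
  · rintro ⟨c, hrvc, hc⟩
    exact ⟨assignmentOf c, assignmentOf_satisfies hrvc hc⟩
  · rintro ⟨σ, hσ⟩
    exact ⟨colorOf σ, rainbowVertexConnected_colorOf hσ, colorOf_lit_true_ne_false σ⟩

open SatGraph in
/-- there is a two-coloring of `G_φ` making it rainbow vertex-connected and
giving `x_j` and `x̄_j` different colors for every `j` iff `φ` is satisfiable. -/
theorem rvc_two_iff_satisfiable {m n : ℕ} (φ : Fin m → Finset (Fin n × Bool))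
    (h3 : ∀ i, (φ i).card ≤ 3) :
    (∃ c : Vert m n → Fin 2, RainbowVertexConnected (graph φ) c ∧
        ∀ j : Fin n, c (Sum.inr (Sum.inl (j, true))) ≠ c (Sum.inr (Sum.inl (j, false)))) ↔
      (∃ σ : Fin n → Bool, ∀ i : Fin m, ∃ l ∈ φ i, σ l.1 = l.2) :=
  rvc_two_iff_satisfiable_general φ
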